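/- arXiv:2202.05550 — 2 statements merged into one kernel-verified Lean document; each statement's English description precedes it below -/
import Mathlib

section
/- A factorial basis B of K[x] with root sequence ρ = ⟨ρ_1, ρ_2, ρ_3, …⟩ is (A,0)-compatible with the shift operator E if and only if for all k ∈ ℕ the multiset inclusion [ρ_1 + 1, ρ_2 + 1, …, ρ_k + 1] ⊆ [ρ_1, ρ_2, …, ρ_{k+A}] holds. -/
open Polynomial Finset

/-- Extension of a sequence of polynomials to integer indices, zero for negative indices. -/
noncomputable def zext {K : Type*} [Field K] (P : ℕ → Polynomial K) : ℤ → Polynomial K :=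
  fun j => if 0 ≤ j then P j.toNat else 0

/-- `(A,B)`-compatibility of a basis `P` with an operator `L`. -/
def IsCompatible {K : Type*} [Field K] (P : ℕ → Polynomial K)
    (L : Polynomial K → Polynomial K) (A B : ℕ) : Prop :=
  ∀ k : ℕ, ∃ α : ℤ → K,
    L (P k) = ∑ i ∈ Finset.Icc (-(A : ℤ)) (B : ℤ), α i • zext P ((k : ℤ) + i)

/-!
Compatibility at `k` says that `E P_k` lies in the span of `P_{k-A}, …, P_k`. Since the
`P_j` are nested by divisibility and have degrees `j`, this span consists exactly of the
multiples of `P_{k-A}` of degree at most `k`; as `deg E P_k = k`, compatibility at `k` is thus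
equivalent to `P_{k-A} ∣ E P_k`. Applying `E⁻¹`, this is
`∏_{j<k-A} (x - ρ_{j+1} - 1) ∣ ∏_{j<k} (x - ρ_{j+1})`, i.e. the multiset inclusion of roots.
-/

section

variable {K : Type*} [Field K]

lemma sum_Icc_smul_zext (P : ℕ → K[X]) (α : ℤ → K) (A k : ℕ) :
    ∑ i ∈ Icc (-(A : ℤ)) 0, α i • zext P (k + i) =
      ∑ j ∈ Ico (k - A) (k + 1), α (j - k) • P j := by
  symm
  calc ∑ j ∈ Ico (k - A) (k + 1), α (j - k) • P j
      = ∑ j ∈ Ico (k - A) (k + 1), α ((j : ℤ) - k) • zext P (k + ((j : ℤ) - k)) :=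
        sum_congr rfl fun j _ => by simp [zext]
    _ = ∑ i ∈ (Ico (k - A) (k + 1)).image (fun j : ℕ => (j : ℤ) - k),
          α i • zext P (k + i) :=
        (sum_image (f := fun i => α i • zext P (k + i)) (g := fun j : ℕ => (j : ℤ) - k)
          fun _ _ _ _ h => by simpa using h).symm
    _ = ∑ i ∈ Icc (-(A : ℤ)) 0, α i • zext P (k + i) := by
        refine sum_subset (fun i hi => ?_) fun i hi hi' => ?_
        · simp only [mem_image, mem_Ico] at hi
          obtain ⟨j, hj, rfl⟩ := hi
          simp only [mem_Icc]
          omega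
        · have hneg : (k : ℤ) + i < 0 := by
            by_contra! h
            refine hi' (mem_image.2 ⟨(k + i).toNat, ?_, by omega⟩)
            simp only [mem_Icc, mem_Ico] at hi ⊢
            omega
          simp [zext, hneg.not_ge]

lemma exists_eq_sum_smul_zext_iff (P : ℕ → K[X]) (f : K[X]) (A k : ℕ) :
    (∃ α : ℤ → K, f = ∑ i ∈ Icc (-(A : ℤ)) 0, α i • zext P (k + i)) ↔
      ∃ β : ℕ → K, f = ∑ j ∈ Ico (k - A) (k + 1), β j • P j := by
  simp_rw [sum_Icc_smul_zext]
  constructor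
  · rintro ⟨α, hα⟩
    exact ⟨fun j => α (j - k), hα⟩
  · rintro ⟨β, hβ⟩
    refine ⟨fun i => β (k + i).toNat, hβ.trans (sum_congr rfl fun j _ => ?_)⟩
    simp

lemma prod_X_sub_C_eq_multiset_prod {ι : Type*} (s : Finset ι) (f : ι → K) :
    ∏ j ∈ s, (X - C (f j)) = ((s.val.map f).map fun a => X - C a).prod := by
  rw [Multiset.map_map, prod_eq_multiset_prod]
  rfl

lemma multiset_prod_X_sub_C_dvd_iff (s t : Multiset K) :
    (s.map fun a => X - C a).prod ∣ (t.map fun a => X - C a).prod ↔ s ≤ t := by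
  rw [Multiset.prod_X_sub_C_dvd_iff_le_roots, roots_multiset_prod_X_sub_C]
  exact (monic_multiset_prod_of_monic _ _ fun a _ => monic_X_sub_C a).ne_zero

structure IsFactorialBasis_s3 (P : ℕ → K[X]) (ρ c : ℕ → K) : Prop where
  coeff_ne_zero : ∀ k, c k ≠ 0
  eq_C_mul_prod : ∀ k, P k = C (c k) * ∏ j ∈ range k, (X - C (ρ j))

namespace IsFactorialBasis_s3

variable {P : ℕ → K[X]} {ρ c : ℕ → K} (hB : IsFactorialBasis_s3 P ρ c)
include hB

lemma degree_eq (k : ℕ) : (P k).degree = k := by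
  simp [hB.eq_C_mul_prod, hB.coeff_ne_zero, degree_prod]

lemma natDegree_eq (k : ℕ) : (P k).natDegree = k :=
  natDegree_eq_of_degree_eq_some (hB.degree_eq k)

lemma coeff_self (k : ℕ) : (P k).coeff k = c k := by
  calc (P k).coeff k = (P k).leadingCoeff := by rw [leadingCoeff, hB.natDegree_eq]
    _ = c k := by
      rw [hB.eq_C_mul_prod, leadingCoeff_mul, leadingCoeff_C,
        (monic_prod_of_monic _ _ fun j _ => monic_X_sub_C (ρ j)).leadingCoeff, mul_one]

lemma dvd_of_le {m k : ℕ} (h : m ≤ k) : P m ∣ P k := by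
  rw [hB.eq_C_mul_prod m, C_mul_dvd (hB.coeff_ne_zero m), hB.eq_C_mul_prod k,
    dvd_C_mul (hB.coeff_ne_zero k)]
  exact prod_dvd_prod_of_subset _ _ _ (range_subset_range.2 h)

lemma taylor_neg_one (m : ℕ) :
    taylor (-1) (P m) = C (c m) * ∏ j ∈ range m, (X - C (ρ j + 1)) := by
  rw [hB.eq_C_mul_prod, taylor_mul, taylor_C]
  refine congrArg _ ((map_prod (taylorAlgHom (-1 : K)) _ _).trans (prod_congr rfl fun j _ => ?_))
  simp only [taylorAlgHom_apply, map_sub, taylor_X, taylor_C, C_add, C_neg, C_1]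
  ring

lemma dvd_taylor_one_iff (m k : ℕ) :
    P m ∣ taylor 1 (P k) ↔ (range m).val.map (fun j => ρ j + 1) ≤ (range k).val.map ρ := by
  rw [← map_dvd_iff (taylorEquiv (-1 : K))]
  change taylor (-1) (P m) ∣ taylor (-1) (taylor 1 (P k)) ↔ _
  rw [taylor_taylor, neg_add_cancel, taylor_zero, hB.taylor_neg_one,
    C_mul_dvd (hB.coeff_ne_zero m), hB.eq_C_mul_prod, dvd_C_mul (hB.coeff_ne_zero k),
    prod_X_sub_C_eq_multiset_prod, prod_X_sub_C_eq_multiset_prod, multiset_prod_X_sub_C_dvd_iff]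

lemma dvd_smul_of_le {m n : ℕ} (h : m ≤ n) (a : K) : P m ∣ a • P n := by
  rw [smul_eq_C_mul]
  exact (hB.dvd_of_le h).mul_left _

lemma exists_eq_sum_Ico_of_dvd {m n : ℕ} (hmn : m ≤ n) {f : K[X]} (hdvd : P m ∣ f)
    (hdeg : f.degree < n) : ∃ β : ℕ → K, f = ∑ j ∈ Ico m n, β j • P j := by
  induction n, hmn using Nat.le_induction generalizing f with
  | base =>
    refine ⟨0, ?_⟩
    simpa using eq_zero_of_dvd_of_degree_lt hdvd (by rwa [hB.degree_eq])
  | succ n hmn ih =>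
    set γ := f.coeff n / c n
    have hdeg' : (f - γ • P n).degree < n := by
      refine (degree_lt_iff_coeff_zero _ _).2 fun j hj => ?_
      rw [coeff_sub, coeff_smul, smul_eq_mul]
      rcases hj.eq_or_lt with rfl | hlt
      · rw [hB.coeff_self, div_mul_cancel₀ _ (hB.coeff_ne_zero _), sub_self]
      · rw [(degree_lt_iff_coeff_zero _ _).1 hdeg j hlt,
          coeff_eq_zero_of_natDegree_lt (by rwa [hB.natDegree_eq]), mul_zero, sub_zero]
    obtain ⟨β, hβ⟩ := ih (dvd_sub hdvd (hB.dvd_smul_of_le hmn γ)) hdeg'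
    refine ⟨Function.update β n γ, ?_⟩
    rw [sum_Ico_succ_top hmn, Function.update_self,
      sum_congr rfl fun j hj => by rw [Function.update_of_ne (mem_Ico.1 hj).2.ne], ← hβ,
      sub_add_cancel]

lemma exists_eq_sum_Ico_iff_dvd {m n : ℕ} (hmn : m ≤ n) {f : K[X]} (hdeg : f.degree < n) :
    (∃ β : ℕ → K, f = ∑ j ∈ Ico m n, β j • P j) ↔ P m ∣ f := by
  refine ⟨?_, fun h => hB.exists_eq_sum_Ico_of_dvd hmn h hdeg⟩
  rintro ⟨β, rfl⟩
  exact dvd_sum fun j hj => hB.dvd_smul_of_le (mem_Ico.1 hj).1 (β j)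

end IsFactorialBasis_s3

end

/-- Here `ρ j` plays the role of `ρ_{j+1}`. -/
theorem isCompatible_shift_iff_roots {K : Type*} [Field K] (P : ℕ → Polynomial K)
    (ρ : ℕ → K) (c : ℕ → K) (hc : ∀ k, c k ≠ 0)
    (hP : ∀ k : ℕ, P k = Polynomial.C (c k) *
      ∏ j ∈ Finset.range k, (X - Polynomial.C (ρ j)))
    (A : ℕ) :
    IsCompatible P (⇑(Polynomial.taylor (1 : K))) A 0 ↔
      ∀ k : ℕ, (Finset.range k).val.map (fun j => ρ j + 1) ≤
        (Finset.range (k + A)).val.map ρ := by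
  have hB : IsFactorialBasis_s3 P ρ c := ⟨hc, hP⟩
  have hdeg (k : ℕ) : (taylor 1 (P k)).degree < ↑(k + 1) := by
    rw [degree_taylor, hB.degree_eq]
    exact_mod_cast k.lt_succ_self
  calc IsCompatible P (taylor 1) A 0 ↔ ∀ k, P (k - A) ∣ taylor 1 (P k) := by
        simp only [IsCompatible, Nat.cast_zero]
        exact forall_congr' fun k => (exists_eq_sum_smul_zext_iff P _ A k).trans
          (hB.exists_eq_sum_Ico_iff_dvd (by omega) (hdeg k))
    _ ↔ ∀ k, P k ∣ taylor 1 (P (k + A)) := by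
        refine ⟨fun h k => by simpa using h (k + A), fun h k => ?_⟩
        rcases le_or_gt A k with hAk | hkA
        · simpa [Nat.sub_add_cancel hAk] using h (k - A)
        · rw [Nat.sub_eq_zero_of_le hkA.le, hB.dvd_taylor_one_iff]
          simp
    _ ↔ _ := forall_congr' fun k => hB.dvd_taylor_one_iff k (k + A)
end

section
/- Let m ∈ ℕ∖{0} and let B = ⟨Q_n(x)⟩_{n=0}^∞ be the c-shuffled basis of factorial bases B_i = ⟨P_n^{(i)}(x)⟩_{n=0}^∞ for i = 1, …, F. Suppose each B_i is (0,1)-compatible in t_i sections with the multiplication-by-x operator X. Then for any t ∈ ℕ∖{0} such that t_i divides t·s_i(m) for each i = 1, …, F, the shuffled basis B is (0,1)-compatible in m·t sections with X. -/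
open Polynomial Finset

/-- A *factorial basis* of `K[x]`: `deg P_k = k` and `P_k ∣ P_{k+1}` for all `k`. -/
def IsFactorialBasis (K : Type*) [Field K] (P : ℕ → Polynomial K) : Prop :=
  ∀ k : ℕ, (P k).degree = (k : ℕ) ∧ P k ∣ P (k + 1)

/-- `(A,B₀)`-compatibility *in `m` sections* of a basis `P` with an operator `L`. -/
def IsCompatibleInSections {K : Type*} [Field K] (P : ℕ → Polynomial K)
    (L : Polynomial K → Polynomial K) (A B₀ m : ℕ) : Prop :=
  ∃ num den : ℕ → ℤ → Polynomial K,
    (∀ (j : ℕ) (i : ℤ) (k : ℕ), (den j i).eval (k : K) ≠ 0) ∧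
    (∀ k : ℕ, ∀ j < m,
      L (P (m * k + j)) = ∑ i ∈ Finset.Icc (-(A : ℤ)) (B₀ : ℤ),
        ((num j i).eval (k : K) / (den j i).eval (k : K)) • zext P (((m * k + j : ℕ) : ℤ) + i))

/-- `sCount c i t = s_i(t) = |{r < t : c_r = i}|`. -/
def sCount (c : ℕ → ℕ) (i t : ℕ) : ℕ :=
  ((Finset.range t).filter (fun r => c r = i)).card

/-- The `c`-shuffled basis of the bases `P 1, …, P F`. -/
noncomputable def shuffled {K : Type*} [Field K] (F m : ℕ) (c : ℕ → ℕ)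
    (P : ℕ → ℕ → Polynomial K) (n : ℕ) : Polynomial K :=
  ∏ i ∈ Finset.Icc 1 F, P i ((n / m) * sCount c i m + sCount c i (n % m))

/-!
Passing from `Q_n` to `Q_{n+1}` raises exactly one factor index, namely `e_i(n)` for
`i = c_{n mod m}`, by one. Hence `X Q_n` is obtained by expanding `X P^{(i)}_{e_i(n)}` with
the compatibility of `B_i`, and the remaining factors turn `P^{(i)}_{e_i(n)}` and
`P^{(i)}_{e_i(n)+1}` back into `Q_n` and `Q_{n+1}`. On the section `n = mtk + J` the index
`e_i(n) = k·t·s_i(m) + e_i(J)` is an affine function of `k` that stays in one residue class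
modulo `t_i`, because `t_i ∣ t·s_i(m)`; so the coefficients are those of `B_i` along an affine
reindexing of `k`, again rational functions of `k`.
-/

section

variable {K : Type*} [Field K]

def IsRationalSeq (f : ℕ → K) : Prop :=
  ∃ p q : K[X], (∀ k : ℕ, q.eval (k : K) ≠ 0) ∧ ∀ k : ℕ, f k = p.eval (k : K) / q.eval (k : K)

lemma isRationalSeq_const (a : K) : IsRationalSeq (fun _ : ℕ => a) :=
  ⟨C a, 1, fun _ => by simp, fun _ => by simp⟩

lemma IsRationalSeq.comp_affine {f : ℕ → K} (hf : IsRationalSeq f) (d a : ℕ) :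
    IsRationalSeq (fun k => f (d * k + a)) := by
  obtain ⟨p, q, hq, hpq⟩ := hf
  have heval (r : K[X]) (k : ℕ) :
      (r.comp (C (d : K) * X + C (a : K))).eval (k : K) = r.eval ((d * k + a : ℕ) : K) := by
    simp
  exact ⟨p.comp (C (d : K) * X + C (a : K)), q.comp (C (d : K) * X + C (a : K)),
    fun k => by rw [heval]; exact hq _, fun k => by rw [heval, heval]; exact hpq _⟩

lemma zext_natCast (P : ℕ → K[X]) (n : ℕ) : zext P (n : ℤ) = P n := by
  simp [zext]

lemma sum_Icc_zero_one {M : Type*} [AddCommMonoid M] (f : ℤ → M) :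
    ∑ i ∈ Icc (-((0 : ℕ) : ℤ)) ((1 : ℕ) : ℤ), f i = f 0 + f 1 := by
  rw [show Icc (-((0 : ℕ) : ℤ)) ((1 : ℕ) : ℤ) = {0, 1} by decide, sum_pair zero_ne_one]

theorem isCompatibleInSections_X_zero_one_iff {P : ℕ → K[X]} {m : ℕ} :
    IsCompatibleInSections P (X * ·) 0 1 m ↔
      ∀ j < m, ∃ α β : ℕ → K, IsRationalSeq α ∧ IsRationalSeq β ∧
        ∀ k, X * P (m * k + j) = α k • P (m * k + j) + β k • P (m * k + j + 1) := by
  constructor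
  · rintro ⟨num, den, hden, h⟩ j hj
    refine ⟨_, _, ⟨num j 0, _, hden j 0, fun _ => rfl⟩, ⟨num j 1, _, hden j 1, fun _ => rfl⟩,
      fun k => ?_⟩
    rw [show X * P (m * k + j) = _ from h k j hj, sum_Icc_zero_one, add_zero, ← Nat.cast_add_one,
      zext_natCast, zext_natCast]
  · intro h
    have hsec : ∀ j, ∃ α β : ℕ → K, IsRationalSeq α ∧ IsRationalSeq β ∧
        (j < m → ∀ k, X * P (m * k + j) = α k • P (m * k + j) + β k • P (m * k + j + 1)) := by
      intro j
      by_cases hj : j < m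
      · obtain ⟨α, β, hα, hβ, hX⟩ := h j hj
        exact ⟨α, β, hα, hβ, fun _ => hX⟩
      · exact ⟨_, _, isRationalSeq_const 0, isRationalSeq_const 0, fun hj' => absurd hj' hj⟩
    choose α β hα hβ hX using hsec
    choose pα qα hqα hpqα using hα
    choose pβ qβ hqβ hpqβ using hβ
    refine ⟨fun j i => if i = 0 then pα j else pβ j, fun j i => if i = 0 then qα j else qβ j,
      fun j i k => ?_, fun k j hj => ?_⟩
    · dsimp only
      split_ifs
      exacts [hqα j k, hqβ j k]
    · dsimp only
      rw [hX j hj k, sum_Icc_zero_one, hpqα, hpqβ, ← Nat.cast_add_one, add_zero,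
        zext_natCast, zext_natCast]
      simp

lemma sCount_succ (c : ℕ → ℕ) (i r : ℕ) :
    sCount c i (r + 1) = sCount c i r + if c r = i then 1 else 0 := by
  unfold sCount
  rw [range_add_one, filter_insert]
  split_ifs
  · rw [card_insert_of_notMem (by simp)]
  · rfl

/-- The index `e_i(n)` of the `i`-th factor of the `n`-th element of the shuffled basis. -/
def shuffleIndex (m : ℕ) (c : ℕ → ℕ) (i n : ℕ) : ℕ :=
  n / m * sCount c i m + sCount c i (n % m)

section ShuffledBasis

variable {F m : ℕ} {c : ℕ → ℕ} {P : ℕ → ℕ → K[X]}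

lemma shuffled_eq_prod (n : ℕ) :
    shuffled F m c P n = ∏ i ∈ Icc 1 F, P i (shuffleIndex m c i n) := rfl

lemma shuffleIndex_succ (hm : 0 < m) (i n : ℕ) :
    shuffleIndex m c i (n + 1) = shuffleIndex m c i n + if c (n % m) = i then 1 else 0 := by
  have hn := Nat.mod_add_div n m
  have hr := Nat.mod_lt n hm
  unfold shuffleIndex
  rcases Nat.lt_or_ge (n % m + 1) m with hlt | hge
  · obtain ⟨hdiv, hmod⟩ :=
      (Nat.div_mod_unique hm).2 ⟨(by omega : n % m + 1 + m * (n / m) = n + 1), hlt⟩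
    rw [hdiv, hmod, sCount_succ, add_assoc]
  · obtain ⟨hdiv, hmod⟩ :=
      (Nat.div_mod_unique hm).2 ⟨(by rw [Nat.mul_add]; omega : 0 + m * (n / m + 1) = n + 1), hm⟩
    have hfull : sCount c i m = sCount c i (n % m) + if c (n % m) = i then 1 else 0 := by
      rw [← sCount_succ, show n % m + 1 = m by omega]
    rw [hdiv, hmod, hfull]
    simp only [sCount, range_zero, filter_empty, card_empty]
    ring

lemma shuffleIndex_mul_add (hm : 0 < m) (i q j : ℕ) :
    shuffleIndex m c i (m * q + j) = q * sCount c i m + shuffleIndex m c i j := by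
  simp only [shuffleIndex, Nat.mul_add_div hm, Nat.mul_add_mod]
  ring

lemma X_mul_shuffled (hm : 0 < m) {n : ℕ} (hcn : c (n % m) ∈ Icc 1 F) {α β : K}
    (h : X * P (c (n % m)) (shuffleIndex m c (c (n % m)) n) =
      α • P (c (n % m)) (shuffleIndex m c (c (n % m)) n) +
        β • P (c (n % m)) (shuffleIndex m c (c (n % m)) n + 1)) :
    X * shuffled F m c P n = α • shuffled F m c P n + β • shuffled F m c P (n + 1) := by
  set i := c (n % m)
  have hrest : ∏ j ∈ (Icc 1 F).erase i, P j (shuffleIndex m c j (n + 1)) =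
      ∏ j ∈ (Icc 1 F).erase i, P j (shuffleIndex m c j n) :=
    prod_congr rfl fun j hj => by
      rw [shuffleIndex_succ hm, if_neg (ne_comm.1 (ne_of_mem_erase hj)), add_zero]
  rw [shuffled_eq_prod, shuffled_eq_prod, ← mul_prod_erase _ _ hcn, ← mul_prod_erase _ _ hcn,
    hrest, shuffleIndex_succ hm, if_pos rfl, ← mul_assoc, h, add_mul, smul_mul_assoc,
    smul_mul_assoc]

lemma exists_X_mul_shuffled_section (hm : 0 < m) {t T J : ℕ} (hcJ : c (J % m) ∈ Icc 1 F)
    (hT : 0 < T) (hcompat : IsCompatibleInSections (P (c (J % m))) (X * ·) 0 1 T)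
    (hdvd : T ∣ t * sCount c (c (J % m)) m) :
    ∃ α β : ℕ → K, IsRationalSeq α ∧ IsRationalSeq β ∧ ∀ k,
      X * shuffled F m c P (m * t * k + J) = α k • shuffled F m c P (m * t * k + J) +
        β k • shuffled F m c P (m * t * k + J + 1) := by
  set i := c (J % m)
  set e := shuffleIndex m c i J
  set d := t * sCount c i m / T
  obtain ⟨α, β, hα, hβ, hPi⟩ :=
    isCompatibleInSections_X_zero_one_iff.1 hcompat (e % T) (Nat.mod_lt e hT)
  refine ⟨fun k => α (d * k + e / T), fun k => β (d * k + e / T),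
    hα.comp_affine _ _, hβ.comp_affine _ _, fun k => ?_⟩
  have hmod : (m * t * k + J) % m = J % m := by rw [mul_assoc, Nat.mul_add_mod]
  have hidx : shuffleIndex m c i (m * t * k + J) = T * (d * k + e / T) + e % T := by
    have hd : t * sCount c i m = T * d := (Nat.mul_div_cancel' hdvd).symm
    have he : T * (e / T) + e % T = e := Nat.div_add_mod e T
    rw [mul_assoc, shuffleIndex_mul_add hm]
    linear_combination (k : ℕ) * hd - he
  apply X_mul_shuffled hm (hmod ▸ hcJ)
  rw [hmod, hidx]
  exact hPi _

end ShuffledBasis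

end

theorem shuffled_compatible_X_general {K : Type*} [Field K]
    (F m : ℕ) (hm : 0 < m)
    (c : ℕ → ℕ) (hc : ∀ r < m, 1 ≤ c r ∧ c r ≤ F)
    (P : ℕ → ℕ → Polynomial K)
    (tt : ℕ → ℕ) (htt : ∀ i : ℕ, 1 ≤ i → i ≤ F → 0 < tt i)
    (hX : ∀ i : ℕ, 1 ≤ i → i ≤ F →
      IsCompatibleInSections (P i) (fun p => X * p) 0 1 (tt i))
    (t : ℕ)
    (hdvd : ∀ i : ℕ, 1 ≤ i → i ≤ F → tt i ∣ t * sCount c i m) :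
    IsCompatibleInSections (shuffled F m c P) (fun p => X * p) 0 1 (m * t) := by
  refine isCompatibleInSections_X_zero_one_iff.2 fun J _ => ?_
  obtain ⟨h1, h2⟩ := hc (J % m) (Nat.mod_lt J hm)
  exact exists_X_mul_shuffled_section hm (mem_Icc.2 ⟨h1, h2⟩) (htt _ h1 h2) (hX _ h1 h2)
    (hdvd _ h1 h2)

/-- If each factorial basis `P i` is `(0,1)`-compatible in `t_i` sections with the
multiplication-by-`x` operator `X`, and `t` is such that `t_i ∣ t·s_i(m)` for each `i`,
then the `c`-shuffled basis is `(0,1)`-compatible in `m·t` sections with `X`. -/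
theorem shuffled_compatible_X {K : Type*} [Field K]
    (F m : ℕ) (hF : 0 < F) (hm : 0 < m)
    (c : ℕ → ℕ) (hc : ∀ r < m, 1 ≤ c r ∧ c r ≤ F)
    (P : ℕ → ℕ → Polynomial K)
    (hP : ∀ i : ℕ, 1 ≤ i → i ≤ F → IsFactorialBasis K (P i))
    (tt : ℕ → ℕ) (htt : ∀ i : ℕ, 1 ≤ i → i ≤ F → 0 < tt i)
    (hX : ∀ i : ℕ, 1 ≤ i → i ≤ F →
      IsCompatibleInSections (P i) (fun p => X * p) 0 1 (tt i))
    (t : ℕ) (ht : 0 < t)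
    (hdvd : ∀ i : ℕ, 1 ≤ i → i ≤ F → tt i ∣ t * sCount c i m) :
    IsCompatibleInSections (shuffled F m c P) (fun p => X * p) 0 1 (m * t) :=
  shuffled_compatible_X_general F m hm c hc P tt htt hX t hdvd
end
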